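/- Let H = {H_n}_{n∈ℕ} be a universal graph series. For a finite DAG G⃗, define Y_{H_n}(G⃗) = X_{H_n}(G,w), where (G,w) is the underlying graph of G⃗ equipped with the recursive in-degree weight. Then the family {Y_{H_n}}_{n∈ℕ} is a complete invariant for finite DAGs: Y_{H_n}(G⃗₁) = Y_{H_n}(G⃗₂) for all n ∈ ℕ if and only if G⃗₁ and G⃗₂ are isomorphic as directed graphs. -/

import Mathlib

/-- Two vertex-weighted graphs are isomorphic: (1) the underlying graphs are
isomorphic, and (2) every graph isomorphism between them preserves the weights. -/
def VWIso {α β : Type} (G₁ : SimpleGraph α) (w₁ : α → ℕ)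
    (G₂ : SimpleGraph β) (w₂ : β → ℕ) : Prop :=
  Nonempty (G₁ ≃g G₂) ∧ ∀ (φ : G₁ ≃g G₂) (v : α), w₂ (φ v) = w₁ v

/-- The underlying simple graph of a directed graph with arc relation `A`, obtained by
forgetting the orientations of the arcs. -/
def underlyingGraph {α : Type} (A : α → α → Prop) : SimpleGraph α where
  Adj u v := u ≠ v ∧ (A u v ∨ A v u)
  symm := ⟨by rintro u v ⟨h, h'⟩; exact ⟨h.symm, h'.symm⟩⟩
  loopless := ⟨by rintro v ⟨h, -⟩; exact h rfl⟩

/-- A directed graph (arc relation) is acyclic: it has no directed cycles, i.e. the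
transitive closure of the arc relation is irreflexive. -/
def IsAcyclicRel {α : Type} (A : α → α → Prop) : Prop :=
  ∀ v, ¬ Relation.TransGen A v v

/-- `w` is the recursive in-degree weight of the DAG with arc relation `A`:
`w v = 1` if `v` has in-degree `0`, and `w v = 1 + max { w u : u → v an arc }`
otherwise. -/
def WeightSpec {α : Type} (A : α → α → Prop) (w : α → ℕ) : Prop :=
  ∀ v : α,
    ((¬ ∃ u, A u v) → w v = 1) ∧
    (∀ u, A u v → w u + 1 ≤ w v) ∧
    ((∃ u, A u v) → ∃ u, A u v ∧ w v = w u + 1)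

/-- Two directed graphs are isomorphic: there is a bijection of the vertex sets
preserving and reflecting arcs. -/
def DigraphIso {α β : Type} (A₁ : α → α → Prop) (A₂ : β → β → Prop) : Prop :=
  ∃ φ : α ≃ β, ∀ u v, A₁ u v ↔ A₂ (φ u) (φ v)

/-- The `H`-chromatic function of a finite vertex-weighted graph `(G, w)`, as a formal
power series in variables indexed by the vertices of `H`. -/
noncomputable def chromFun {α β : Type} [Fintype α] (G : SimpleGraph α) (w : α → ℕ)
    (H : SimpleGraph β) : (β →₀ ℕ) → ℕ :=
  fun d => Nat.card {φ : G →g H //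
    Finsupp.mapDomain (⇑φ) (Finsupp.equivFunOnFinite.symm w) = d}

/-- A family `{H_n}` of graphs is a universal graph series if every finite simple graph
embeds in some `H_n` as an induced subgraph. -/
def IsUniversalSeries {β : ℕ → Type} (H : ∀ n, SimpleGraph (β n)) : Prop :=
  ∀ (α : Type) [Fintype α] (G : SimpleGraph α), ∃ n, Nonempty (G ↪g H n)

/-! ### Auxiliary lemmas -/

private lemma mapd_apply {α γ : Type} [Fintype α] [DecidableEq γ] (f : α → γ) (w : α → ℕ)
    (y : γ) :
    Finsupp.mapDomain f (Finsupp.equivFunOnFinite.symm w) y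
      = ∑ x : α, if f x = y then w x else 0 := by
  classical
  rw [Finsupp.mapDomain, Finsupp.sum_fintype _ _ (fun _ => Finsupp.single_zero _)]
  rw [Finsupp.finset_sum_apply]
  simp [Finsupp.single_apply]

private lemma wpos {α : Type} {A : α → α → Prop} {w : α → ℕ} (hw : WeightSpec A w) (v : α) :
    1 ≤ w v := by
  by_cases h : ∃ u, A u v
  · obtain ⟨u, -, he⟩ := (hw v).2.2 h; omega
  · rw [(hw v).1 h]

private lemma wle {α : Type} {A : α → α → Prop} {w w' : α → ℕ} (hw : WeightSpec A w)
    (hw' : WeightSpec A w') : ∀ n v, w v ≤ n → w' v ≤ w v := by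
  intro n
  induction n with
  | zero => intro v hv; have := wpos hw v; omega
  | succ n ih =>
    intro v hv
    by_cases h : ∃ u, A u v
    · obtain ⟨u, hu, he⟩ := (hw' v).2.2 h
      have h2 := (hw v).2.1 u hu
      have h3 := ih u (by omega)
      omega
    · rw [(hw' v).1 h]; exact wpos hw v

private lemma wuniq {α : Type} {A : α → α → Prop} {w w' : α → ℕ} (hw : WeightSpec A w)
    (hw' : WeightSpec A w') : w = w' :=
  funext fun v => le_antisymm (wle hw' hw _ v le_rfl) (wle hw hw' _ v le_rfl)

private lemma arc_iff {α : Type} {A : α → α → Prop} {w : α → ℕ} (hw : WeightSpec A w)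
    (u v : α) : A u v ↔ (underlyingGraph A).Adj u v ∧ w u < w v := by
  constructor
  · intro h
    have h2 := (hw v).2.1 u h
    have hne : u ≠ v := by rintro rfl; omega
    exact ⟨⟨hne, Or.inl h⟩, by omega⟩
  · rintro ⟨⟨hne, h | h⟩, hlt⟩
    · exact h
    · have := (hw u).2.1 v h; omega

private lemma push_surj {β : Type} [Fintype β] (h : β → β) (w : β → ℕ) (hw : ∀ v, 1 ≤ w v)
    (hp : Finsupp.mapDomain h (Finsupp.equivFunOnFinite.symm w)
        = Finsupp.equivFunOnFinite.symm w) :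
    Function.Surjective h := by
  classical
  intro v
  by_contra hc
  push_neg at hc
  have h1 := DFunLike.congr_fun hp v
  rw [mapd_apply] at h1
  rw [Finset.sum_eq_zero (fun x _ => if_neg (hc x))] at h1
  have := hw v
  simp [Finsupp.equivFunOnFinite_symm_apply_apply] at h1
  omega

private lemma reflect {α β : Type} [Fintype α] [Fintype β] (G₁ : SimpleGraph α)
    (G₂ : SimpleGraph β)
    (f : β → α) (g : α → β) (hfinj : Function.Injective f) (hginj : Function.Injective g)
    (hfhom : ∀ u v, G₂.Adj u v → G₁.Adj (f u) (f v))
    (hghom : ∀ u v, G₁.Adj u v → G₂.Adj (g u) (g v)) :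
    ∀ u v, G₁.Adj (f u) (f v) → G₂.Adj u v := by
  classical
  set S₁ : Finset (α × α) := Finset.univ.filter (fun p => G₁.Adj p.1 p.2) with hS₁
  set S₂ : Finset (β × β) := Finset.univ.filter (fun p => G₂.Adj p.1 p.2) with hS₂
  have hFinj : Function.Injective (fun p : β × β => (f p.1, f p.2)) := by
    rintro ⟨a, b⟩ ⟨c, d⟩ h
    simp only [Prod.mk.injEq] at h
    exact Prod.ext (hfinj h.1) (hfinj h.2)
  have hGinj : Function.Injective (fun p : α × α => (g p.1, g p.2)) := by
    rintro ⟨a, b⟩ ⟨c, d⟩ h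
    simp only [Prod.mk.injEq] at h
    exact Prod.ext (hginj h.1) (hginj h.2)
  have hsub : S₂.image (fun p => (f p.1, f p.2)) ⊆ S₁ := by
    intro p hp
    simp only [hS₂, hS₁, Finset.mem_image, Finset.mem_filter, Finset.mem_univ, true_and]
      at hp ⊢
    obtain ⟨q, hq, rfl⟩ := hp
    exact hfhom _ _ hq
  have hsub' : S₁.image (fun p => (g p.1, g p.2)) ⊆ S₂ := by
    intro p hp
    simp only [hS₂, hS₁, Finset.mem_image, Finset.mem_filter, Finset.mem_univ, true_and]
      at hp ⊢
    obtain ⟨q, hq, rfl⟩ := hp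
    exact hghom _ _ hq
  have hc1 : S₂.card ≤ S₁.card := by
    rw [← Finset.card_image_of_injective S₂ hFinj]; exact Finset.card_le_card hsub
  have hc2 : S₁.card ≤ S₂.card := by
    rw [← Finset.card_image_of_injective S₁ hGinj]; exact Finset.card_le_card hsub'
  have heq : S₂.image (fun p => (f p.1, f p.2)) = S₁ :=
    Finset.eq_of_subset_of_card_le hsub
      (by rw [Finset.card_image_of_injective S₂ hFinj]; omega)
  intro u v hadj
  have : (f u, f v) ∈ S₁ := by simp [hS₁, hadj]
  rw [← heq] at this
  simp only [Finset.mem_image, Finset.mem_filter, Finset.mem_univ, true_and,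
    Prod.mk.injEq] at this
  obtain ⟨⟨a, b⟩, hq, h1, h2⟩ := this
  simp only [hS₂, Finset.mem_filter, Finset.mem_univ, true_and] at hq
  rwa [← hfinj h1, ← hfinj h2]

private lemma extract {γ : ℕ → Type} (H : ∀ n, SimpleGraph (γ n)) (hH : IsUniversalSeries H)
    {α β : Type} [Fintype α] [Fintype β] (G₁ : SimpleGraph α) (G₂ : SimpleGraph β)
    (w₁ : α → ℕ) (w₂ : β → ℕ) (h₁ : ∀ v, 1 ≤ w₁ v) (h₂ : ∀ v, 1 ≤ w₂ v)
    (hc : ∀ n, chromFun G₁ w₁ (H n) = chromFun G₂ w₂ (H n)) :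
    ∃ f : β → α, (∀ u v, G₂.Adj u v → G₁.Adj (f u) (f v)) ∧
      Finsupp.mapDomain f (Finsupp.equivFunOnFinite.symm w₂)
        = Finsupp.equivFunOnFinite.symm w₁ := by
  classical
  obtain ⟨n, ⟨ι⟩⟩ := hH α G₁
  set d : γ n →₀ ℕ := Finsupp.mapDomain (⇑ι) (Finsupp.equivFunOnFinite.symm w₁) with hd
  have hmem : ∀ {δ : Type} [Fintype δ] (w : δ → ℕ), (∀ v, 1 ≤ w v) →
      ∀ (ψ : δ → γ n), Finsupp.mapDomain ψ (Finsupp.equivFunOnFinite.symm w) = d →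
      ∀ a, d (ψ a) ≠ 0 := by
    intro δ _ w hwp ψ hψ a
    rw [← hψ, mapd_apply]
    have : w a ≤ ∑ x : δ, if ψ x = ψ a then w x else 0 := by
      have := Finset.single_le_sum (f := fun x => if ψ x = ψ a then w x else 0)
        (fun i _ => by positivity) (Finset.mem_univ a)
      simpa using this
    have := hwp a
    omega
  have hrange : ∀ y, d y ≠ 0 → ∃ a, ι a = y := by
    intro y hy
    rw [hd, mapd_apply] at hy
    by_contra hcon
    push_neg at hcon
    exact hy (Finset.sum_eq_zero fun x _ => if_neg (hcon x))
  have hι : Finsupp.mapDomain (⇑ι.toHom) (Finsupp.equivFunOnFinite.symm w₁) = d := rfl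
  have hne : Nonempty {φ : G₁ →g H n //
      Finsupp.mapDomain (⇑φ) (Finsupp.equivFunOnFinite.symm w₁) = d} := ⟨⟨ι.toHom, hι⟩⟩
  have hfin : Finite {φ : G₁ →g H n //
      Finsupp.mapDomain (⇑φ) (Finsupp.equivFunOnFinite.symm w₁) = d} := by
    let F : {φ : G₁ →g H n // Finsupp.mapDomain (⇑φ) (Finsupp.equivFunOnFinite.symm w₁) = d}
        → (α → {y // y ∈ d.support}) := fun φ a =>
      ⟨φ.1 a, Finsupp.mem_support_iff.mpr (hmem w₁ h₁ (⇑φ.1) φ.2 a)⟩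
    refine Finite.of_injective F ?_
    intro φ φ' h
    ext a
    exact congrArg Subtype.val (congrFun h a)
  have hcard : chromFun G₁ w₁ (H n) d ≠ 0 :=
    Nat.card_ne_zero.mpr ⟨hne, hfin⟩
  rw [hc n] at hcard
  have hne₂ : Nonempty {φ : G₂ →g H n //
      Finsupp.mapDomain (⇑φ) (Finsupp.equivFunOnFinite.symm w₂) = d} :=
    (Nat.card_ne_zero.mp hcard).1
  obtain ⟨⟨ψ, hψ⟩⟩ := hne₂
  have hr : ∀ b, ∃ a, ι a = ψ b := fun b => hrange _ (hmem w₂ h₂ (⇑ψ) hψ b)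
  set f : β → α := fun b => Classical.choose (hr b) with hf
  have hfb : ∀ b, ι (f b) = ψ b := fun b => Classical.choose_spec (hr b)
  refine ⟨f, ?_, ?_⟩
  · intro u v h
    have := ψ.map_adj h
    rw [← hfb u, ← hfb v] at this
    exact ι.map_adj_iff.mp this
  · ext v
    rw [mapd_apply, Finsupp.equivFunOnFinite_symm_apply_apply]
    have hcond : ∀ u, (f u = v) = (ψ u = ι v) := by
      intro u
      rw [← hfb u]
      exact propext ⟨fun h => by rw [h], fun h => ι.injective h⟩
    calc (∑ x : β, if f x = v then w₂ x else 0)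
        = ∑ x : β, if ψ x = ι v then w₂ x else 0 := by
          apply Finset.sum_congr rfl; intro x _; rw [hcond x]
      _ = Finsupp.mapDomain (⇑ψ) (Finsupp.equivFunOnFinite.symm w₂) (ι v) := by
          rw [mapd_apply]
      _ = d (ι v) := by rw [hψ]
      _ = w₁ v := by
          rw [hd, Finsupp.mapDomain_apply ι.injective]
          simp

/-- For a universal graph series `{H_n}`, the family of invariants
`Y_{H_n}(G⃗) = X_{H_n}(G, w)` (where `(G, w)` is the underlying graph of the DAG `G⃗`
with the recursive in-degree weight) is a complete invariant for finite DAGs. -/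
theorem stmt_11 {γ : ℕ → Type} (H : ∀ n, SimpleGraph (γ n)) (hH : IsUniversalSeries H)
    {α β : Type} [Fintype α] [Fintype β]
    (A₁ : α → α → Prop) (A₂ : β → β → Prop)
    (hA₁ : IsAcyclicRel A₁) (hA₂ : IsAcyclicRel A₂)
    (w₁ : α → ℕ) (w₂ : β → ℕ) (hw₁ : WeightSpec A₁ w₁) (hw₂ : WeightSpec A₂ w₂) :
    (∀ n, chromFun (underlyingGraph A₁) w₁ (H n) = chromFun (underlyingGraph A₂) w₂ (H n))
      ↔ DigraphIso A₁ A₂ := by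
  classical
  constructor
  · intro hc
    have h₁ := wpos hw₁
    have h₂ := wpos hw₂
    obtain ⟨f, hfhom, hfpush⟩ :=
      extract H hH (underlyingGraph A₁) (underlyingGraph A₂) w₁ w₂ h₁ h₂ hc
    obtain ⟨g, hghom, hgpush⟩ :=
      extract H hH (underlyingGraph A₂) (underlyingGraph A₁) w₂ w₁ h₂ h₁
        (fun n => (hc n).symm)
    have hgf : Finsupp.mapDomain (g ∘ f) (Finsupp.equivFunOnFinite.symm w₂)
        = Finsupp.equivFunOnFinite.symm w₂ := by
      rw [Finsupp.mapDomain_comp, hfpush, hgpush]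
    have hfg : Finsupp.mapDomain (f ∘ g) (Finsupp.equivFunOnFinite.symm w₁)
        = Finsupp.equivFunOnFinite.symm w₁ := by
      rw [Finsupp.mapDomain_comp, hgpush, hfpush]
    have hgfs := push_surj (g ∘ f) w₂ h₂ hgf
    have hfgs := push_surj (f ∘ g) w₁ h₁ hfg
    have hfinj : Function.Injective f :=
      Function.Injective.of_comp (Finite.injective_iff_surjective.mpr hgfs)
    have hginj : Function.Injective g :=
      Function.Injective.of_comp (Finite.injective_iff_surjective.mpr hfgs)
    have hfsurj : Function.Surjective f := Function.Surjective.of_comp hfgs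
    have hwp : ∀ u, w₁ (f u) = w₂ u := by
      intro u
      have h := Finsupp.mapDomain_apply hfinj (Finsupp.equivFunOnFinite.symm w₂) u
      rw [hfpush] at h
      simpa using h
    have hrefl := reflect (underlyingGraph A₁) (underlyingGraph A₂) f g hfinj hginj
      hfhom hghom
    let e : β ≃ α := Equiv.ofBijective f ⟨hfinj, hfsurj⟩
    refine ⟨e.symm, ?_⟩
    intro u v
    have hu : f (e.symm u) = u := e.apply_symm_apply u
    have hv : f (e.symm v) = v := e.apply_symm_apply v
    rw [arc_iff hw₁, arc_iff hw₂]
    constructor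
    · rintro ⟨hadj, hlt⟩
      rw [← hu, ← hv] at hadj
      refine ⟨hrefl _ _ hadj, ?_⟩
      rw [← hu, ← hv, hwp, hwp] at hlt
      exact hlt
    · rintro ⟨hadj, hlt⟩
      have h3 := hfhom _ _ hadj
      rw [hu, hv] at h3
      refine ⟨h3, ?_⟩
      rw [← hu, ← hv, hwp, hwp]
      exact hlt
  · rintro ⟨φ, hφ⟩
    have hws : WeightSpec A₁ (fun v => w₂ (φ v)) := by
      intro v
      have hex : (∃ u, A₁ u v) ↔ (∃ u', A₂ u' (φ v)) := by
        constructor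
        · rintro ⟨u, h⟩; exact ⟨φ u, (hφ u v).mp h⟩
        · rintro ⟨u', h⟩
          refine ⟨φ.symm u', (hφ _ v).mpr ?_⟩
          rwa [Equiv.apply_symm_apply]
      refine ⟨?_, ?_, ?_⟩
      · intro h; exact (hw₂ (φ v)).1 (fun hx => h (hex.mpr hx))
      · intro u h; exact (hw₂ (φ v)).2.1 (φ u) ((hφ u v).mp h)
      · intro h
        obtain ⟨u', hu', he⟩ := (hw₂ (φ v)).2.2 (hex.mp h)
        refine ⟨φ.symm u', (hφ _ v).mpr (by rwa [Equiv.apply_symm_apply]), ?_⟩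
        simpa [Equiv.apply_symm_apply] using he
    have hwe : ∀ v, w₂ (φ v) = w₁ v := fun v => (congrFun (wuniq hws hw₁) v)
    let e : underlyingGraph A₁ ≃g underlyingGraph A₂ := by
      refine ⟨φ, ?_⟩
      intro a b
      show (underlyingGraph A₂).Adj (φ a) (φ b) ↔ (underlyingGraph A₁).Adj a b
      constructor
      · rintro ⟨hne, h | h⟩
        · exact ⟨fun hh => hne (congrArg φ hh), Or.inl ((hφ a b).mpr h)⟩
        · exact ⟨fun hh => hne (congrArg φ hh), Or.inr ((hφ b a).mpr h)⟩
      · rintro ⟨hne, h | h⟩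
        · exact ⟨fun hh => hne (φ.injective hh), Or.inl ((hφ a b).mp h)⟩
        · exact ⟨fun hh => hne (φ.injective hh), Or.inr ((hφ b a).mp h)⟩
    intro n
    funext d
    have hmd : Finsupp.mapDomain (⇑φ.symm) (Finsupp.equivFunOnFinite.symm w₂)
        = Finsupp.equivFunOnFinite.symm w₁ := by
      ext v
      rw [mapd_apply, Finsupp.equivFunOnFinite_symm_apply_apply]
      have hcnd : ∀ u : β, (φ.symm u = v) = (u = φ v) :=
        fun u => propext (by rw [Equiv.symm_apply_eq])
      calc (∑ x : β, if φ.symm x = v then w₂ x else 0)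
          = ∑ x : β, if x = φ v then w₂ x else 0 :=
            Finset.sum_congr rfl (fun x _ => by rw [hcnd x])
        _ = w₂ (φ v) := by rw [Finset.sum_ite_eq' Finset.univ (φ v) w₂]; simp
        _ = w₁ v := hwe v
    have hmd' : Finsupp.mapDomain (⇑φ) (Finsupp.equivFunOnFinite.symm w₁)
        = Finsupp.equivFunOnFinite.symm w₂ := by
      ext v
      rw [mapd_apply, Finsupp.equivFunOnFinite_symm_apply_apply]
      have hcnd : ∀ u : α, (φ u = v) = (u = φ.symm v) :=
        fun u => propext (Equiv.apply_eq_iff_eq_symm_apply φ)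
      calc (∑ x : α, if φ x = v then w₁ x else 0)
          = ∑ x : α, if x = φ.symm v then w₁ x else 0 :=
            Finset.sum_congr rfl (fun x _ => by rw [hcnd x])
        _ = w₁ (φ.symm v) := by rw [Finset.sum_ite_eq' Finset.univ (φ.symm v) w₁]; simp
        _ = w₂ v := by rw [← hwe (φ.symm v), Equiv.apply_symm_apply]
    unfold chromFun
    apply Nat.card_congr
    refine ⟨fun ψ => ⟨ψ.1.comp e.symm.toHom, ?_⟩, fun ψ => ⟨ψ.1.comp e.toHom, ?_⟩, ?_, ?_⟩
    · have hco : ⇑(ψ.1.comp e.symm.toHom) = ⇑ψ.1 ∘ ⇑φ.symm := rfl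
      rw [hco, Finsupp.mapDomain_comp, hmd, ψ.2]
    · have hco : ⇑(ψ.1.comp e.toHom) = ⇑ψ.1 ∘ ⇑φ := rfl
      rw [hco, Finsupp.mapDomain_comp, hmd', ψ.2]
    · intro ψ
      apply Subtype.ext
      apply DFunLike.ext
      intro x
      show ψ.1 (φ.symm (φ x)) = ψ.1 x
      rw [Equiv.symm_apply_apply]
    · intro ψ
      apply Subtype.ext
      apply DFunLike.ext
      intro x
      show ψ.1 (φ (φ.symm x)) = ψ.1 x
      rw [Equiv.apply_symm_apply]
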